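/- Let N+ be a rooted binary phylogenetic network on taxon set X with |X| ≥ 4 and let Q = {a,b,c,d} ⊆ X. The following are equivalent: (1) Q determines a blob of N+ (i.e., Q is a B-quartet); (2) there is a single blob of N+ such that deletion of all edges of that blob leaves the elements of Q in four distinct connected components; (3) the unresolved quartet on Q is displayed on the reduced unrooted tree of blobs T_rd(N−), i.e., no edge of T_rd(N−) separates exactly two elements of Q from the other two. -/

import Mathlib

/-!
# Common framework

Finite directed multigraphs, undirected connectivity, numbers of connected
components, cut edges, subgraphs, blobs, blobs determined by leaf sets,
B-quartets, and quartets displayed via cut-edge separation.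

A *network* is modelled as a finite directed multigraph (edge directions are
simply ignored for the undirected notions of connectivity, cut edges and
blobs).
-/

/-- A finite directed multigraph: finite types of nodes and of edges, with
source and target maps. -/
structure MDigraph where
  V : Type
  E : Type
  finV : Finite V
  finE : Finite E
  src : E → V
  tgt : E → V

attribute [instance] MDigraph.finV MDigraph.finE

namespace MDigraph

section Basic

variable (G : MDigraph)

/-- One undirected step between `u` and `v` along an edge from the set `F`. -/
def Step (F : Set G.E) (u v : G.V) : Prop :=
  ∃ e ∈ F, (G.src e = u ∧ G.tgt e = v) ∨ (G.src e = v ∧ G.tgt e = u)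

/-- Undirected reachability (an undirected path) using only edges in `F`. -/
def Conn (F : Set G.E) (u v : G.V) : Prop :=
  Relation.ReflTransGen (G.Step F) u v

/-- One directed step from `u` to `v` along an edge from the set `F`. -/
def DStep (F : Set G.E) (u v : G.V) : Prop :=
  ∃ e ∈ F, G.src e = u ∧ G.tgt e = v

/-- Directed reachability (a directed path) using only edges in `F`. -/
def DConn (F : Set G.E) (u v : G.V) : Prop :=
  Relation.ReflTransGen (G.DStep F) u v

/-- `u` is above (ancestral to) `v`: there is a directed path from `u` to `v`. -/
def Above (u v : G.V) : Prop := G.DConn Set.univ u v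

/-- In-degree of a node. -/
noncomputable def inDeg (v : G.V) : ℕ := Nat.card {e : G.E // G.tgt e = v}

/-- Out-degree of a node. -/
noncomputable def outDeg (v : G.V) : ℕ := Nat.card {e : G.E // G.src e = v}

/-- Undirected degree of a node (a loop counts twice). -/
noncomputable def degree (v : G.V) : ℕ := G.inDeg v + G.outDeg v

/-- The number of connected components of the graph with node set `W` and edge
set the restriction to `W` of `F` (two nodes of `W` lie in the same connected
component iff they are joined by an undirected path). -/
noncomputable def numComponents (W : Set G.V) (F : Set G.E) : ℕ :=
  Nat.card (Quot (fun u v : W => G.Step {e ∈ F | G.src e ∈ W ∧ G.tgt e ∈ W} u.1 v.1))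

/-- `v` lies on every directed path from `u` to `w`: there is no directed path
from `u` to `w` all of whose nodes avoid `v`. -/
def OnEveryPath (v u w : G.V) : Prop :=
  ¬ (u ≠ v ∧ w ≠ v ∧
      Relation.ReflTransGen (fun a b => G.DStep Set.univ a b ∧ a ≠ v ∧ b ≠ v) u w)

end Basic

/-- A subgraph (subnetwork): a set of nodes together with a set of edges
joining them. -/
structure Subgraph (G : MDigraph) where
  verts : Set G.V
  edges : Set G.E
  src_mem : ∀ e ∈ edges, G.src e ∈ verts
  tgt_mem : ∀ e ∈ edges, G.tgt e ∈ verts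

/-- The whole graph, as a subgraph of itself. -/
def top (G : MDigraph) : Subgraph G :=
  ⟨Set.univ, Set.univ, fun _ _ => Set.mem_univ _, fun _ _ => Set.mem_univ _⟩

namespace Subgraph

variable {G : MDigraph}

/-- Containment of subgraphs. -/
def le (H K : Subgraph G) : Prop := H.verts ⊆ K.verts ∧ H.edges ⊆ K.edges

/-- The subgraph `H` is connected. -/
def IsConnected (H : Subgraph G) : Prop :=
  H.verts.Nonempty ∧ ∀ u ∈ H.verts, ∀ v ∈ H.verts, G.Conn H.edges u v

/-- Delete an edge from a subgraph. -/
def deleteEdge (H : Subgraph G) (e : G.E) : Subgraph G :=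
  ⟨H.verts, H.edges \ {e}, fun e' he' => H.src_mem e' he'.1,
    fun e' he' => H.tgt_mem e' he'.1⟩

/-- The number of connected components of a subgraph. -/
noncomputable def numComponents (H : Subgraph G) : ℕ :=
  G.numComponents H.verts H.edges

/-- `e` is a cut edge of the (sub)graph `H`: deleting it increases the number
of connected components. -/
def IsCutEdge (H : Subgraph G) (e : G.E) : Prop :=
  e ∈ H.edges ∧ H.numComponents < (H.deleteEdge e).numComponents

end Subgraph

variable {G : MDigraph}

/-- `B` is a blob of the network `H`: a maximal connected subnetwork of `H`
having no cut edges.  (A blob is *trivial* if it consists of a single node.) -/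
def IsBlobIn (H B : Subgraph G) : Prop :=
  B.le H ∧ B.IsConnected ∧ (∀ e, ¬ B.IsCutEdge e) ∧
    ∀ B' : Subgraph G, B'.le H → B'.IsConnected → (∀ e, ¬ B'.IsCutEdge e) →
      B.le B' → B'.le B

/-- `e` is a cut edge of the network `H` incident to the blob `B`: exactly one
of its endpoints is a node of `B`. -/
def IncidentCut (H B : Subgraph G) (e : G.E) : Prop :=
  H.IsCutEdge e ∧ Xor' (G.src e ∈ B.verts) (G.tgt e ∈ B.verts)

/-- The blob `B` of the network `H` is determined by the set `S` of leaf
labels: deletion of the cut edges of `H` incident to `B` leaves the nodes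
labelled by the elements of `S` in distinct connected components. -/
def DeterminesIn {X : Type} (H B : Subgraph G) (leaf : X → G.V) (S : Set X) : Prop :=
  ∀ s ∈ S, ∀ t ∈ S, s ≠ t →
    ¬ G.Conn {e ∈ H.edges | ¬ IncidentCut H B e} (leaf s) (leaf t)

/-- Four taxa form a B-quartet on the network `H`: some blob of `H` is
determined by them. -/
def BQuartetIn {X : Type} (H : Subgraph G) (leaf : X → G.V) (a b c d : X) : Prop :=
  ∃ B : Subgraph G, IsBlobIn H B ∧ DeterminesIn H B leaf ({a, b, c, d} : Set X)

/-- Some cut edge of `H` separates the taxa `p, q` from the taxa `r, s`: after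
its deletion `p, q` lie in one connected component and `r, s` in another.  For
a 4-taxon set `{p,q,r,s}` this says exactly that the (reduced unrooted) tree of
blobs of `H` displays the resolved quartet `pq|rs` (the edges of the tree of
blobs correspond exactly to the cut edges of the network, and suppressing
degree-2 nodes or contracting blobs does not affect which taxa a cut edge
separates). -/
def CutSep {X : Type} (H : Subgraph G) (leaf : X → G.V) (p q r s : X) : Prop :=
  ∃ e, H.IsCutEdge e ∧
    G.Conn (H.edges \ {e}) (leaf p) (leaf q) ∧
    G.Conn (H.edges \ {e}) (leaf r) (leaf s) ∧
    ¬ G.Conn (H.edges \ {e}) (leaf p) (leaf r)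

end MDigraph
open MDigraph in
/-- A rooted binary phylogenetic network on the taxon set `X`: a connected
directed acyclic graph whose node set consists of a root (in-degree 0,
out-degree 2), leaves (in-degree 1, out-degree 0) bijectively labelled by `X`,
tree nodes (in-degree 1, out-degree 2) and hybrid nodes (in-degree 2,
out-degree 1). -/
structure PhyloNetwork (X : Type) extends MDigraph where
  root : toMDigraph.V
  leaf : X → toMDigraph.V
  leaf_inj : Function.Injective leaf
  root_in : toMDigraph.inDeg root = 0
  root_out : toMDigraph.outDeg root = 2
  leaf_in : ∀ x, toMDigraph.inDeg (leaf x) = 1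
  leaf_out : ∀ x, toMDigraph.outDeg (leaf x) = 0
  internal : ∀ v, v ≠ root → (∀ x, v ≠ leaf x) →
      (toMDigraph.inDeg v = 1 ∧ toMDigraph.outDeg v = 2) ∨
      (toMDigraph.inDeg v = 2 ∧ toMDigraph.outDeg v = 1)
  acyclic : ∀ v, ¬ Relation.TransGen (toMDigraph.DStep Set.univ) v v
  conn : ∀ u v, toMDigraph.Conn Set.univ u v

namespace PhyloNetwork

open MDigraph

variable {X : Type} (N : PhyloNetwork X)

/-- The subnetwork of `N⁺` consisting of all nodes and edges ancestral to at
least one taxon in `Y`.  Since suppressing nodes of in- and out-degree 1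
affects neither blobs, nor cut edges, nor which sets of taxa they separate,
this subnetwork faithfully represents the induced network `N⁺_Y`. -/
def inducedSub (Y : Set X) : Subgraph N.toMDigraph where
  verts := {v | ∃ y ∈ Y, N.toMDigraph.Above v (N.leaf y)}
  edges := {e | ∃ y ∈ Y, N.toMDigraph.Above (N.toMDigraph.tgt e) (N.leaf y)}
  src_mem := by
    rintro e ⟨y, hy, h⟩
    exact ⟨y, hy, Relation.ReflTransGen.head ⟨e, Set.mem_univ e, rfl, rfl⟩ h⟩
  tgt_mem := by
    rintro e ⟨y, hy, h⟩
    exact ⟨y, hy, h⟩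

/-- `v` is a stable ancestor of the leaves: it is ancestral to every leaf and
lies on every directed path from the root to any leaf. -/
def IsStableAncestor (v : N.toMDigraph.V) : Prop :=
  (∀ x, N.toMDigraph.Above v (N.leaf x)) ∧
  ∀ x, N.toMDigraph.OnEveryPath v N.root (N.leaf x)

/-- `v` is the lowest stable ancestor (LSA) of the network: a stable ancestor
below all stable ancestors. -/
def IsLSA (v : N.toMDigraph.V) : Prop :=
  N.IsStableAncestor v ∧ ∀ u, N.IsStableAncestor u → N.toMDigraph.Above u v

/-- The number of cut edges of `N⁺` incident to the blob `B`. -/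
noncomputable def blobDeg (B : Subgraph N.toMDigraph) : ℕ :=
  Nat.card {e : N.toMDigraph.E // IncidentCut (top N.toMDigraph) B e}

/-- `B` is an `m`-blob of the rooted network `N⁺`: if the root is not in `B`
then `B` has exactly `m` incident cut edges, while if the root is in `B` then
`B` has exactly `m - 1` incident cut edges. -/
def IsMBlob (B : Subgraph N.toMDigraph) (m : ℕ) : Prop :=
  IsBlobIn (top N.toMDigraph) B ∧
    ((N.root ∈ B.verts ∧ m = N.blobDeg B + 1) ∨ (N.root ∉ B.verts ∧ m = N.blobDeg B))

end PhyloNetwork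

open MDigraph

/-!
Blobs are the classes of connectivity through non-bridges, and the cut edges of the network
are exactly its bridges.  If a blob `B` is determined by `Q`, a bridge splitting `Q` two against
two has `B` on one side, and the pair on the other side stays connected after deleting the cut
edges at `B`; so (1) excludes a split.  Conversely, if no bridge splits `Q` two against two,
pick a vertex `v` on the majority side of every bridge; then every bridge cuts off at most one
taxon of `Q` from `v`.  Because the network is binary, the blob of `v` is nontrivial and each of
its vertices carries at most one bridge, so each taxon of `Q` hangs off this blob through its
own bridge and deleting the blob's edges separates the four taxa: this is (2).  Finally (2)
gives (1), since an edge that is not a cut edge at `B` never joins `B` to its outside.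
-/

theorem Quot.natCard_eq_iff_le_eqvGen {α : Type*} [Finite α] {r s : α → α → Prop} (h : r ≤ s) :
    Nat.card (Quot s) = Nat.card (Quot r) ↔ s ≤ Relation.EqvGen r := by
  have hsurj : Function.Surjective (Quot.factor r s h) := by
    rintro ⟨x⟩; exact ⟨Quot.mk _ x, rfl⟩
  rw [eq_comm, ← Nat.bijective_iff_surjective_and_card _ |>.trans (and_iff_right hsurj),
    Function.Bijective, and_iff_left hsurj]
  constructor
  · intro hinj x y hxy
    exact Quot.eq.1 (hinj (Quot.sound hxy))
  · rintro hle ⟨x⟩ ⟨y⟩ hxy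
    exact Quot.eq.2 (Relation.EqvGen.eqvGen_le hle _ _ (Quot.eq.1 hxy))

namespace MDigraph

variable {G : MDigraph}

def IsIncident (e : G.E) (v : G.V) : Prop := G.src e = v ∨ G.tgt e = v

def Separates (f : G.E) (u v : G.V) : Prop := ¬ G.Conn (Set.univ \ {f}) u v

def IsBridge (e : G.E) : Prop := G.Separates e (G.src e) (G.tgt e)

def Connected (G : MDigraph) : Prop := ∀ u v, G.Conn Set.univ u v

theorem Step.symm {F : Set G.E} {u v : G.V} (h : G.Step F u v) : G.Step F v u :=
  let ⟨e, he, h⟩ := h; ⟨e, he, h.symm⟩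

instance (F : Set G.E) : Std.Symm (G.Step F) := ⟨fun _ _ => Step.symm⟩

theorem Conn.symm {F : Set G.E} {u v : G.V} (h : G.Conn F u v) : G.Conn F v u :=
  Std.Symm.symm (r := Relation.ReflTransGen (G.Step F)) _ _ h

theorem Conn.trans {F : Set G.E} {u v w : G.V} (h : G.Conn F u v) (h' : G.Conn F v w) :
    G.Conn F u w :=
  Relation.ReflTransGen.trans h h'

theorem Conn.refl (F : Set G.E) (u : G.V) : G.Conn F u u := Relation.ReflTransGen.refl

theorem Conn.mono {F F' : Set G.E} (hF : F ⊆ F') {u v : G.V} (h : G.Conn F u v) :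
    G.Conn F' u v :=
  Relation.ReflTransGen.mono (fun _ _ ⟨e, he, h⟩ => ⟨e, hF he, h⟩) _ _ h

theorem conn_of_mem {F : Set G.E} {e : G.E} (he : e ∈ F) : G.Conn F (G.src e) (G.tgt e) :=
  .single ⟨e, he, .inl ⟨rfl, rfl⟩⟩

theorem conn_diff_singleton_of_ne {f e : G.E} (h : e ≠ f) :
    G.Conn (Set.univ \ {f}) (G.src e) (G.tgt e) :=
  conn_of_mem ⟨trivial, h⟩

theorem Conn.restrict_of_invariant {F : Set G.E} {P : G.V → Prop}
    (hP : ∀ e ∈ F, P (G.src e) ↔ P (G.tgt e)) {u v : G.V} (h : G.Conn F u v) (hu : P u) :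
    G.Conn {e ∈ F | P (G.src e) ∧ P (G.tgt e)} u v ∧ P v := by
  induction h with
  | refl => exact ⟨.refl _ _, hu⟩
  | tail _ hs ih =>
    obtain ⟨e, he, hj⟩ := hs
    obtain ⟨ihc, ihP⟩ := ih
    rcases hj with ⟨rfl, rfl⟩ | ⟨rfl, rfl⟩
    · exact ⟨ihc.tail ⟨e, ⟨he, ihP, (hP e he).1 ihP⟩, .inl ⟨rfl, rfl⟩⟩, (hP e he).1 ihP⟩
    · exact ⟨ihc.tail ⟨e, ⟨he, (hP e he).2 ihP, ihP⟩, .inr ⟨rfl, rfl⟩⟩, (hP e he).2 ihP⟩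

theorem Conn.exists_mem_isIncident {F : Set G.E} {u w : G.V} (h : G.Conn F u w) (hne : u ≠ w) :
    ∃ e ∈ F, G.IsIncident e w := by
  induction h with
  | refl => exact absurd rfl hne
  | tail _ hs _ =>
    obtain ⟨e, he, ⟨-, h⟩ | ⟨h, -⟩⟩ := hs
    exacts [⟨e, he, .inr h⟩, ⟨e, he, .inl h⟩]

theorem Conn.diff_singleton_or {F : Set G.E} {e : G.E} {p q : G.V} (h : G.Conn F p q) :
    G.Conn (F \ {e}) p q ∨
      (G.Conn (F \ {e}) p (G.src e) ∧ G.Conn (F \ {e}) (G.tgt e) q) ∨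
      (G.Conn (F \ {e}) p (G.tgt e) ∧ G.Conn (F \ {e}) (G.src e) q) := by
  induction h with
  | refl => exact .inl (.refl _ _)
  | @tail x z _ hs ih =>
    obtain ⟨g, hg, hj⟩ := hs
    by_cases hge : g = e
    · subst hge
      rcases hj with ⟨rfl, rfl⟩ | ⟨rfl, rfl⟩ <;>
        rcases ih with h | ⟨h1, h2⟩ | ⟨h1, h2⟩
      exacts [.inr (.inl ⟨h, .refl _ _⟩), .inr (.inl ⟨h1, .refl _ _⟩), .inl h1,
        .inr (.inr ⟨h, .refl _ _⟩), .inl h1, .inr (.inr ⟨h1, .refl _ _⟩)]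
    · have hs : G.Step (F \ {e}) x z := ⟨g, ⟨hg, hge⟩, hj⟩
      exact ih.imp (·.tail hs) (Or.imp (And.imp_right (·.tail hs)) (And.imp_right (·.tail hs)))

namespace Subgraph

variable (K : Subgraph G)

theorem numComponents_eq :
    K.numComponents = Nat.card (Quot fun u v : K.verts => G.Step K.edges u v) := by
  have : {e ∈ K.edges | G.src e ∈ K.verts ∧ G.tgt e ∈ K.verts} = K.edges :=
    Set.sep_eq_self_iff_mem_true.2 fun e he => ⟨K.src_mem e he, K.tgt_mem e he⟩
  rw [numComponents, MDigraph.numComponents, this]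

theorem reflTransGen_step_iff_conn {u v : K.verts} :
    Relation.ReflTransGen (fun u v : K.verts => G.Step K.edges u v) u v ↔ G.Conn K.edges u v := by
  refine ⟨Relation.ReflTransGen.lift Subtype.val (fun _ _ h => h) _ _, fun h => ?_⟩
  obtain ⟨u, hu⟩ := u
  obtain ⟨v, hv⟩ := v
  change G.Conn K.edges u v at h
  revert hv
  induction h with
  | refl => exact fun _ => .refl
  | @tail x z _ hs ih =>
    intro hz
    obtain ⟨e, he, hj⟩ := hs
    have hx : x ∈ K.verts := by
      rcases hj with ⟨rfl, -⟩ | ⟨-, rfl⟩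
      exacts [K.src_mem e he, K.tgt_mem e he]
    exact (ih hx).tail ⟨e, he, hj⟩

theorem isCutEdge_iff {e : G.E} :
    K.IsCutEdge e ↔ e ∈ K.edges ∧ ¬ G.Conn (K.edges \ {e}) (G.src e) (G.tgt e) := by
  refine and_congr_right fun he => ?_
  have : Std.Symm fun u v : K.verts => G.Step (K.edges \ {e}) u v :=
    ⟨fun _ _ => Step.symm⟩
  have hrs : (fun u v : K.verts => G.Step (K.edges \ {e}) u v) ≤
      fun u v : K.verts => G.Step K.edges u v :=
    fun _ _ ⟨g, hg, hj⟩ => ⟨g, hg.1, hj⟩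
  have hle := Nat.card_le_card_of_surjective (Quot.factor _ _ hrs) (by
    rintro ⟨x⟩; exact ⟨Quot.mk _ x, rfl⟩)
  rw [numComponents_eq, numComponents_eq (K.deleteEdge e)]
  change _ < Nat.card (Quot fun u v : K.verts => G.Step (K.edges \ {e}) u v) ↔ _
  rw [lt_iff_le_and_ne, and_iff_right hle, Ne, Quot.natCard_eq_iff_le_eqvGen hrs,
    Relation.EqvGen.eqvGen_eq_reflTransGen]
  refine not_congr ⟨fun h => ?_, fun h u v ⟨g, hg, hj⟩ => ?_⟩
  · exact (reflTransGen_step_iff_conn (K.deleteEdge e)).1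
      (h ⟨_, K.src_mem e he⟩ ⟨_, K.tgt_mem e he⟩ ⟨e, he, .inl ⟨rfl, rfl⟩⟩)
  · refine (reflTransGen_step_iff_conn (K.deleteEdge e)).2 ?_
    by_cases hge : g = e
    · subst hge
      rcases hj with ⟨h1, h2⟩ | ⟨h1, h2⟩
      · rw [← h1, ← h2]; exact h
      · rw [← h1, ← h2]; exact h.symm
    · exact .single ⟨g, ⟨hg, hge⟩, hj⟩

end Subgraph

theorem isCutEdge_top_iff {e : G.E} : (top G).IsCutEdge e ↔ G.IsBridge e := by
  rw [Subgraph.isCutEdge_iff]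
  exact and_iff_right trivial

theorem Separates.symm {f : G.E} {u v : G.V} (h : G.Separates f u v) : G.Separates f v u :=
  fun h' => h h'.symm

theorem IsBridge.separates_of_isIncident {f : G.E} {u w : G.V} (hf : G.IsBridge f)
    (hu : G.IsIncident f u) (hw : G.IsIncident f w) (huw : u ≠ w) : G.Separates f u w := by
  rcases hu with rfl | rfl <;> rcases hw with rfl | rfl
  exacts [absurd rfl huw, hf, hf.symm, absurd rfl huw]

theorem conn_or_conn_diff_singleton (hG : G.Connected) (f : G.E) (x : G.V) :
    G.Conn (Set.univ \ {f}) x (G.src f) ∨ G.Conn (Set.univ \ {f}) x (G.tgt f) := by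
  rcases (hG x (G.src f)).diff_singleton_or (e := f) with h | ⟨h, -⟩ | ⟨h, -⟩
  exacts [.inl h, .inl h, .inr h]

theorem conn_or_conn_or_conn_diff_singleton (hG : G.Connected) (f : G.E) (u v w : G.V) :
    G.Conn (Set.univ \ {f}) u v ∨ G.Conn (Set.univ \ {f}) u w ∨ G.Conn (Set.univ \ {f}) v w := by
  rcases conn_or_conn_diff_singleton hG f u with hu | hu <;>
    rcases conn_or_conn_diff_singleton hG f v with hv | hv <;>
    rcases conn_or_conn_diff_singleton hG f w with hw | hw
  all_goals first
    | exact .inl (hu.trans hv.symm)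
    | exact .inr (.inl (hu.trans hw.symm))
    | exact .inr (.inr (hv.trans hw.symm))

theorem Separates.separates_iff (hG : G.Connected) {f : G.E} {v w : G.V}
    (h : G.Separates f v w) (x : G.V) : G.Separates f w x ↔ ¬ G.Separates f v x := by
  refine ⟨fun hwx => ?_, fun hvx hwx => h ((not_not.1 hvx).trans hwx.symm)⟩
  rcases conn_or_conn_or_conn_diff_singleton hG f v w x with h' | h' | h'
  exacts [absurd h' h, not_not.2 h', absurd h' hwx]

theorem Separates.not_separates_of_separates (hG : G.Connected) {f : G.E} {v x y : G.V}
    (hx : G.Separates f v x) (hy : G.Separates f v y) : ¬ G.Separates f x y :=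
  fun hxy => (hx.separates_iff hG y).1 hxy hy

theorem IsBridge.exists_isIncident_separates (hG : G.Connected) {f : G.E} (hf : G.IsBridge f)
    (v : G.V) : ∃ w, G.IsIncident f w ∧ G.Separates f v w := by
  rcases conn_or_conn_diff_singleton hG f v with h | h
  · exact ⟨G.tgt f, .inr rfl, fun h' => hf (h.symm.trans h')⟩
  · exact ⟨G.src f, .inl rfl, fun h' => hf (h'.symm.trans h)⟩

theorem Conn.diff_bridge {F : Set G.E} {f : G.E} {p q : G.V} (h : G.Conn F p q)
    (hf : G.IsBridge f) (hpq : ¬ G.Separates f p q) : G.Conn (F \ {f}) p q := by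
  have hsub : F \ {f} ⊆ Set.univ \ {f} := fun g hg => ⟨trivial, hg.2⟩
  rcases h.diff_singleton_or (e := f) with h | ⟨h1, h2⟩ | ⟨h1, h2⟩
  · exact h
  · exact absurd ((h1.mono hsub).symm.trans ((not_not.1 hpq).trans (h2.mono hsub).symm)) hf
  · exact absurd ((h2.mono hsub).trans ((not_not.1 hpq).symm.trans (h1.mono hsub))) hf

theorem Conn.diff_bridges {F : Set G.E} {p q : G.V} (h : G.Conn F p q) (T : Finset G.E)
    (hT : ∀ f ∈ T, G.IsBridge f ∧ ¬ G.Separates f p q) : G.Conn (F \ T) p q := by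
  classical
  induction T using Finset.induction_on with
  | empty => simpa using h
  | insert f T _ ih =>
    have hf := hT f (Finset.mem_insert_self f T)
    refine ((ih fun g hg => hT g (Finset.mem_insert_of_mem hg)).diff_bridge hf.1 hf.2).mono ?_
    rintro g ⟨⟨hgF, hgT⟩, hgf⟩
    simp_all

def nonBridges (G : MDigraph) : Set G.E := {e | ¬ G.IsBridge e}

theorem Conn.nonBridges_of_not_separates {F : Set G.E} {p q : G.V} (h : G.Conn F p q)
    (hpq : ∀ f, G.IsBridge f → ¬ G.Separates f p q) : G.Conn (F ∩ G.nonBridges) p q := by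
  classical
  have := Fintype.ofFinite G.E
  refine (h.diff_bridges (Finset.univ.filter G.IsBridge) fun f hf => ?_).mono ?_
  · exact ⟨(Finset.mem_filter.1 hf).2, hpq f (Finset.mem_filter.1 hf).2⟩
  · rintro g ⟨hgF, hg⟩
    exact ⟨hgF, fun hb => hg (by simpa using hb)⟩

theorem conn_nonBridges_diff_of_not_isBridge {e : G.E} (he : ¬ G.IsBridge e) :
    G.Conn (G.nonBridges \ {e}) (G.src e) (G.tgt e) := by
  refine ((not_not.1 he).nonBridges_of_not_separates fun f hf hsep => ?_).mono ?_
  · by_cases hfe : f = e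
    · exact he (hfe ▸ hsep)
    · exact hsep (conn_diff_singleton_of_ne (Ne.symm hfe))
  · rintro g ⟨⟨-, hge⟩, hg⟩
    exact ⟨hg, hge⟩

theorem separates_src_iff_of_ne {f e : G.E} (h : e ≠ f) (v : G.V) :
    G.Separates f v (G.src e) ↔ G.Separates f v (G.tgt e) :=
  not_congr ⟨(·.trans (conn_diff_singleton_of_ne h)),
    (·.trans (conn_diff_singleton_of_ne h).symm)⟩

theorem ncard_setOf_isIncident_le_degree (v : G.V) :
    {e | G.IsIncident e v}.ncard ≤ G.degree v := by
  rw [← Nat.card_coe_set_eq, degree, inDeg, outDeg, add_comm, ← Nat.card_sum]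
  refine Nat.card_le_card_of_surjective
    (Sum.elim (fun e => ⟨e.1, .inl e.2⟩) (fun e => ⟨e.1, .inr e.2⟩)) ?_
  rintro ⟨e, he | he⟩
  exacts [⟨.inl ⟨e, he⟩, rfl⟩, ⟨.inr ⟨e, he⟩, rfl⟩]

theorem nonBridges_subset_diff_singleton {f : G.E} (hf : G.IsBridge f) :
    G.nonBridges ⊆ Set.univ \ {f} :=
  fun _ he => ⟨trivial, fun h => he ((Set.mem_singleton_iff.1 h).symm ▸ hf)⟩

/-- The vertex set of the blob containing `v`. -/
def cls (G : MDigraph) (v : G.V) : Set G.V := {u | G.Conn G.nonBridges u v}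

def blobOf (G : MDigraph) (v : G.V) : Subgraph G where
  verts := G.cls v
  edges := {e ∈ G.nonBridges | G.src e ∈ G.cls v ∧ G.tgt e ∈ G.cls v}
  src_mem _ he := he.2.1
  tgt_mem _ he := he.2.2

theorem mem_cls_self (v : G.V) : v ∈ G.cls v := .refl _ _

theorem cls_eq_of_mem {u v : G.V} (hu : u ∈ G.cls v) : G.cls u = G.cls v :=
  Set.ext fun _ => ⟨fun h => h.trans hu, fun h => h.trans hu.symm⟩

theorem mem_cls_iff_of_mem_nonBridges {e : G.E} (he : e ∈ G.nonBridges) (v : G.V) :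
    G.src e ∈ G.cls v ↔ G.tgt e ∈ G.cls v :=
  ⟨(conn_of_mem he).symm.trans, (conn_of_mem he).trans⟩

theorem not_separates_of_mem_cls {f : G.E} (hf : G.IsBridge f) {u v : G.V}
    (hu : u ∈ G.cls v) : ¬ G.Separates f v u :=
  not_not.2 (hu.mono (nonBridges_subset_diff_singleton hf)).symm

theorem Subgraph.edges_subset_nonBridges {B : Subgraph G} (hB : ∀ e, ¬ B.IsCutEdge e) :
    B.edges ⊆ G.nonBridges := fun e he hbr =>
  hB e ((B.isCutEdge_iff).2
    ⟨he, fun h => hbr (h.mono (F' := Set.univ \ {e}) fun _ hg => ⟨trivial, hg.2⟩)⟩)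

theorem Subgraph.le_blobOf {B : Subgraph G} (hc : B.IsConnected) (hB : ∀ e, ¬ B.IsCutEdge e)
    {v : G.V} (hv : v ∈ B.verts) : B.le (G.blobOf v) := by
  have hverts : B.verts ⊆ G.cls v := fun u hu =>
    (hc.2 u hu v hv).mono (Subgraph.edges_subset_nonBridges hB)
  exact ⟨hverts, fun e he => ⟨Subgraph.edges_subset_nonBridges hB he,
    hverts (B.src_mem e he), hverts (B.tgt_mem e he)⟩⟩

theorem blobOf_isBlobIn (v : G.V) : IsBlobIn (top G) (G.blobOf v) := by
  refine ⟨⟨Set.subset_univ _, Set.subset_univ _⟩,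
    ⟨⟨v, mem_cls_self v⟩, fun u hu w hw => ?_⟩, fun e he => ?_,
    fun B _ hc hB hle => Subgraph.le_blobOf hc hB (hle.1 (mem_cls_self v))⟩
  · exact ((hu.trans hw.symm).restrict_of_invariant
      (fun _ he => mem_cls_iff_of_mem_nonBridges he v) hu).1
  · obtain ⟨⟨heB, hsrc, -⟩, hconn⟩ := (Subgraph.isCutEdge_iff _).1 he
    refine hconn (((conn_nonBridges_diff_of_not_isBridge heB).restrict_of_invariant
      (fun g hg => mem_cls_iff_of_mem_nonBridges hg.1 v) hsrc).1.mono ?_)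
    rintro g ⟨⟨hg, hge⟩, hgs, hgt⟩
    exact ⟨⟨hg, hgs, hgt⟩, hge⟩

theorem IsBlobIn.blobOf_le {B : Subgraph G} (hB : IsBlobIn (top G) B) {v : G.V}
    (hv : v ∈ B.verts) : (G.blobOf v).le B :=
  let h := blobOf_isBlobIn v
  hB.2.2.2 _ h.1 h.2.1 h.2.2.1 (Subgraph.le_blobOf hB.2.1 hB.2.2.1 hv)

theorem IsBlobIn.mem_iff_of_mem_nonBridges {B : Subgraph G} (hB : IsBlobIn (top G) B)
    {e : G.E} (he : e ∈ G.nonBridges) :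
    G.src e ∈ B.verts ↔ G.tgt e ∈ B.verts :=
  ⟨fun hs => (hB.blobOf_le hs).1 (conn_of_mem he).symm,
    fun ht => (hB.blobOf_le ht).1 (conn_of_mem he)⟩

theorem IsBlobIn.not_separates {B : Subgraph G} (hB : IsBlobIn (top G) B) {f : G.E}
    (hf : G.IsBridge f) {u v : G.V} (hu : u ∈ B.verts) (hv : v ∈ B.verts) :
    ¬ G.Separates f u v :=
  not_not.2 ((hB.2.1.2 u hu v hv).mono
    ((Subgraph.edges_subset_nonBridges hB.2.2.1).trans (nonBridges_subset_diff_singleton hf)))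

theorem exists_isBridge_separates_of_notMem_cls (hG : G.Connected) {u v : G.V}
    (hu : u ∉ G.cls v) :
    ∃ g w, G.IsBridge g ∧ w ∈ G.cls v ∧ G.IsIncident g w ∧ G.Separates g v u := by
  suffices ∀ u, G.Conn Set.univ v u → u ∈ G.cls v ∨
      ∃ g w, G.IsBridge g ∧ w ∈ G.cls v ∧ G.IsIncident g w ∧ G.Separates g v u from
    (this u (hG v u)).resolve_left hu
  intro u h
  induction h with
  | refl => exact .inl (mem_cls_self v)
  | @tail x z _ hs ih =>
    obtain ⟨e, -, hj⟩ := hs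
    by_cases hz : z ∈ G.cls v
    · exact .inl hz
    rcases ih with hx | ⟨g, w, hg, hw, hgw, hsep⟩
    · have hbr : G.IsBridge e := by
        by_contra he
        rcases hj with ⟨rfl, rfl⟩ | ⟨rfl, rfl⟩
        exacts [hz ((mem_cls_iff_of_mem_nonBridges he v).1 hx),
          hz ((mem_cls_iff_of_mem_nonBridges he v).2 hx)]
      refine .inr ⟨e, x, hbr, hx, ?_, fun hvz => ?_⟩
      · rcases hj with ⟨rfl, -⟩ | ⟨-, rfl⟩
        exacts [.inl rfl, .inr rfl]
      · have hxz := (not_not.1 (not_separates_of_mem_cls hbr hx)).symm.trans hvz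
        rcases hj with ⟨rfl, rfl⟩ | ⟨rfl, rfl⟩
        exacts [hbr hxz, hbr hxz.symm]
    · by_cases hge : e = g
      · subst hge
        exfalso
        have hwxz : w = x ∨ w = z := by
          rcases hgw with rfl | rfl <;> rcases hj with ⟨rfl, rfl⟩ | ⟨rfl, rfl⟩ <;> simp
        rcases hwxz with rfl | rfl
        exacts [not_separates_of_mem_cls hg hw hsep, hz hw]
      · refine .inr ⟨g, w, hg, hw, hgw, fun hvz => hsep (hvz.trans ?_)⟩
        rcases hj with ⟨rfl, rfl⟩ | ⟨rfl, rfl⟩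
        exacts [(conn_diff_singleton_of_ne hge).symm, conn_diff_singleton_of_ne hge]

section Centroid

variable {ι : Type*} (l : ι → G.V) (Q : Set ι)

theorem Separates.separates_of_isIncident {f g : G.E} {v w x : G.V} (hg : G.Separates g v w)
    (hfw : G.IsIncident f w) (hf : G.Separates f v x) : G.Separates g v x := by
  intro hvx
  refine hf ((hvx.restrict_of_invariant (P := fun y => ¬ G.Separates g v y)
    (fun e he => not_congr (separates_src_iff_of_ne he.2 v)) (not_not.2 (.refl _ v))).1.mono ?_)
  rintro e ⟨-, hs, ht⟩
  refine ⟨trivial, fun hef => ?_⟩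
  rw [Set.mem_singleton_iff.1 hef] at hs ht
  rcases hfw with rfl | rfl
  exacts [hs hg, ht hg]

theorem Separates.setOf_separates_eq (hG : G.Connected) {f : G.E} {v w : G.V}
    (h : G.Separates f v w) :
    {i ∈ Q | G.Separates f w (l i)} = Q \ {i ∈ Q | G.Separates f v (l i)} := by
  ext i
  simp only [Set.mem_ofPred_eq, Set.mem_sdiff, h.separates_iff hG, and_congr_right_iff]
  tauto

theorem setOf_separates_eq_of_not_separates {f : G.E} {v w : G.V} (h : ¬ G.Separates f v w) :
    {i ∈ Q | G.Separates f w (l i)} = {i ∈ Q | G.Separates f v (l i)} := by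
  ext i
  refine and_congr_right fun _ => not_congr ⟨fun h' => (not_not.1 h).trans h', fun h' => ?_⟩
  exact (not_not.1 h).symm.trans h'

/-- Walking across a bridge that has a strict majority of `Q` on its far side strictly decreases
the number of such bridges. -/
theorem exists_forall_two_mul_ncard_separates_le (hG : G.Connected) [Nonempty G.V]
    (hQ : Q.Finite) :
    ∃ v, ∀ f, G.IsBridge f → 2 * {i ∈ Q | G.Separates f v (l i)}.ncard ≤ Q.ncard := by
  have hcompl : ∀ f v w, G.Separates f v w → {i ∈ Q | G.Separates f w (l i)}.ncard +
      {i ∈ Q | G.Separates f v (l i)}.ncard = Q.ncard := fun f v w h => by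
    rw [h.setOf_separates_eq l Q hG]
    exact Set.ncard_sdiff_add_ncard_of_subset (Set.sep_subset _ _) hQ
  set bad : G.V → Set G.E :=
    fun v => {f | G.IsBridge f ∧ Q.ncard < 2 * {i ∈ Q | G.Separates f v (l i)}.ncard}
  obtain ⟨v, hv⟩ := Finite.exists_min fun v => (bad v).ncard
  refine ⟨v, fun f hf => not_lt.1 fun hfv => ?_⟩
  obtain ⟨w, hfw, hvw⟩ := hf.exists_isIncident_separates hG v
  have hsub : bad w ⊂ bad v := by
    refine ⟨fun g ⟨hg, hgw⟩ => ⟨hg, ?_⟩, fun h => ?_⟩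
    · by_cases hsep : G.Separates g v w
      · have hnest := Set.ncard_le_ncard (s := {i ∈ Q | G.Separates f v (l i)})
          (t := {i ∈ Q | G.Separates g v (l i)})
          (fun i hi => ⟨hi.1, hsep.separates_of_isIncident hfw hi.2⟩)
          (hQ.subset (Set.sep_subset _ _))
        have := hcompl g v w hsep
        omega
      · rwa [← setOf_separates_eq_of_not_separates l Q hsep]
    · have := hcompl f v w hvw
      have := (h ⟨hf, hfv⟩).2
      omega
  exact (Set.ncard_lt_ncard hsub).not_ge (hv w)

end Centroid

section Quartets

variable {X : Type} {l : X → G.V}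

theorem CutSep.symm {p q r s : X} (h : CutSep (top G) l p q r s) : CutSep (top G) l r s p q :=
  let ⟨f, hf, hpq, hrs, hpr⟩ := h
  ⟨f, hf, hrs, hpq, fun h => hpr h.symm⟩

theorem cutSep_of_separates (hG : G.Connected) {f : G.E} (hf : G.IsBridge f) {v : G.V}
    {p q r s : X} (hp : G.Separates f v (l p)) (hq : G.Separates f v (l q))
    (hr : ¬ G.Separates f v (l r)) (hs : ¬ G.Separates f v (l s)) :
    CutSep (top G) l p q r s :=
  ⟨f, isCutEdge_top_iff.2 hf, not_not.1 (hp.not_separates_of_separates hG hq),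
    (not_not.1 hr).symm.trans (not_not.1 hs), fun h => hp ((not_not.1 hr).trans h.symm)⟩

theorem subsingleton_setOf_separates_of_not_cutSep (hG : G.Connected) {f : G.E}
    (hf : G.IsBridge f) (v : G.V) {a b c d : X} (hab : a ≠ b) (hac : a ≠ c) (had : a ≠ d)
    (hbc : b ≠ c) (hbd : b ≠ d) (hcd : c ≠ d)
    (hmaj : 2 * {x ∈ ({a, b, c, d} : Set X) | G.Separates f v (l x)}.ncard ≤ 4)
    (hno : ¬ (CutSep (top G) l a b c d ∨ CutSep (top G) l a c b d ∨ CutSep (top G) l a d b c)) :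
    {x ∈ ({a, b, c, d} : Set X) | G.Separates f v (l x)}.Subsingleton := by
  set Q : Set X := {a, b, c, d}
  set sep : X → Prop := fun x => G.Separates f v (l x)
  change 2 * {x ∈ Q | sep x}.ncard ≤ 4 at hmaj
  have three : ∀ {x y z : X}, x ∈ Q → y ∈ Q → z ∈ Q → x ≠ y → x ≠ z → y ≠ z →
      sep x → sep y → ¬ sep z := fun hx hy hz hxy hxz hyz sx sy sz => by
    have := Set.ncard_le_ncard (t := {x ∈ Q | sep x}) (s := {_, _, _}) (Set.insert_subset
      ⟨hx, sx⟩ (Set.insert_subset ⟨hy, sy⟩ (Set.singleton_subset_iff.2 ⟨hz, sz⟩)))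
    rw [Set.ncard_insert_of_notMem (by simp [hxy, hxz]), Set.ncard_pair hyz] at this
    omega
  have split : ∀ {p q r t : X}, ¬ CutSep (top G) l p q r t →
      ¬ (sep p ∧ sep q ∧ ¬ sep r ∧ ¬ sep t) ∧ ¬ (¬ sep p ∧ ¬ sep q ∧ sep r ∧ sep t) :=
    fun h => ⟨fun ⟨hp, hq, hr, ht⟩ => h (cutSep_of_separates hG hf hp hq hr ht),
      fun ⟨hp, hq, hr, ht⟩ => h (cutSep_of_separates hG hf hr ht hp hq).symm⟩
  have := split fun h => hno (.inl h)
  have := split fun h => hno (.inr (.inl h))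
  have := split fun h => hno (.inr (.inr h))
  have := three (x := a) (y := b) (z := c) (by simp [Q]) (by simp [Q]) (by simp [Q]) hab hac hbc
  have := three (x := a) (y := b) (z := d) (by simp [Q]) (by simp [Q]) (by simp [Q]) hab had hbd
  have := three (x := a) (y := c) (z := d) (by simp [Q]) (by simp [Q]) (by simp [Q]) hac had hcd
  have := three (x := b) (y := c) (z := d) (by simp [Q]) (by simp [Q]) (by simp [Q]) hbc hbd hcd
  clear three split hno hmaj
  -- Two distinct taxa cut off from `v` force the other two onto the side of `v` (by `three`),
  -- which is one of the excluded two-against-two splits.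
  rintro x ⟨hx, sx : sep x⟩ y ⟨hy, sy : sep y⟩
  simp only [Q, Set.mem_insert_iff, Set.mem_singleton_iff] at hx hy
  rcases hx with rfl | rfl | rfl | rfl <;> rcases hy with rfl | rfl | rfl | rfl <;>
    first | rfl | (exfalso; simp_all)

theorem not_cutSep_of_determinesIn {B : Subgraph G} (hB : IsBlobIn (top G) B) {Q : Set X}
    (hdet : DeterminesIn (top G) B l Q) {p q r s : X} (hp : p ∈ Q) (hq : q ∈ Q) (hr : r ∈ Q)
    (hs : s ∈ Q) (hpq : p ≠ q) (hrs : r ≠ s) : ¬ CutSep (top G) l p q r s := by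
  rintro ⟨f, hcut, hpq', hrs', hpr⟩
  have hf := isCutEdge_top_iff.1 hcut
  obtain ⟨v, hv⟩ := hB.2.1.1
  have key : ∀ x y, G.Conn (Set.univ \ {f}) (l x) (l y) → G.Separates f v (l x) →
      G.Conn {e ∈ (top G).edges | ¬ IncidentCut (top G) B e} (l x) (l y) := by
    intro x y hxy hx
    refine (hxy.restrict_of_invariant (P := G.Separates f v)
      (fun e he => separates_src_iff_of_ne he.2 v) hx).1.mono ?_
    rintro e ⟨-, hes, het⟩
    refine ⟨trivial, fun ⟨_, hxor⟩ => ?_⟩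
    rcases hxor with ⟨hsB, -⟩ | ⟨htB, -⟩
    exacts [hes (not_not.1 (hB.not_separates hf hv hsB)),
      het (not_not.1 (hB.not_separates hf hv htB))]
  by_cases hvp : G.Separates f v (l p)
  · exact hdet p hp q hq hpq (key p q hpq' hvp)
  · exact hdet r hr s hs hrs (key r s hrs' fun hvr => hpr ((not_not.1 hvp).symm.trans hvr))

theorem determinesIn_of_not_conn {B : Subgraph G} (hB : IsBlobIn (top G) B) {Q : Set X}
    (hQB : ∀ x ∈ Q, l x ∉ B.verts)
    (hsep : ∀ p ∈ Q, ∀ q ∈ Q, p ≠ q → ¬ G.Conn {e | e ∉ B.edges} (l p) (l q)) :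
    DeterminesIn (top G) B l Q := by
  intro p hp q hq hpq hconn
  have hinv : ∀ e ∈ {e ∈ (top G).edges | ¬ IncidentCut (top G) B e},
      G.src e ∉ B.verts ↔ G.tgt e ∉ B.verts := by
    rintro e ⟨-, he⟩
    refine not_congr ?_
    by_cases hb : G.IsBridge e
    · by_contra hiff
      exact he ⟨isCutEdge_top_iff.2 hb, (xor_iff_not_iff _ _).2 hiff⟩
    · exact hB.mem_iff_of_mem_nonBridges hb
  refine hsep p hp q hq hpq
    ((hconn.restrict_of_invariant (P := (· ∉ B.verts)) hinv (hQB p hp)).1.mono ?_)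
  rintro e ⟨-, hes, -⟩ heB
  exact hes (B.src_mem e heB)

theorem BQuartetIn.not_cutSep {a b c d : X} (h : BQuartetIn (top G) l a b c d) (hab : a ≠ b)
    (hac : a ≠ c) (had : a ≠ d) (hbc : b ≠ c) (hbd : b ≠ d) (hcd : c ≠ d) :
    ¬ (CutSep (top G) l a b c d ∨ CutSep (top G) l a c b d ∨ CutSep (top G) l a d b c) := by
  obtain ⟨B, hB, hdet⟩ := h
  rintro (h | h | h)
  · exact not_cutSep_of_determinesIn hB hdet (by simp) (by simp) (by simp) (by simp) hab hcd h
  · exact not_cutSep_of_determinesIn hB hdet (by simp) (by simp) (by simp) (by simp) hac hbd h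
  · exact not_cutSep_of_determinesIn hB hdet (by simp) (by simp) (by simp) (by simp) had hbc h

end Quartets

end MDigraph

namespace PhyloNetwork

variable {X : Type} (N : PhyloNetwork X)

theorem src_ne_tgt (e : N.E) : N.src e ≠ N.tgt e := fun h =>
  N.acyclic _ (.single ⟨e, trivial, rfl, h.symm⟩)

theorem degree_le_three (v : N.V) : N.degree v ≤ 3 := by
  unfold degree
  by_cases hr : v = N.root
  · subst hr; rw [N.root_in, N.root_out]; omega
  by_cases hl : ∃ x, v = N.leaf x
  · obtain ⟨x, rfl⟩ := hl; rw [N.leaf_in x, N.leaf_out x]; omega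
  push Not at hl
  rcases N.internal v hr hl with ⟨h1, h2⟩ | ⟨h1, h2⟩ <;> rw [h1, h2]

theorem degree_leaf (x : X) : N.degree (N.leaf x) = 1 := by
  rw [degree, N.leaf_in x, N.leaf_out x]

theorem exists_isIncident_leaf_iff (x : X) : ∃ e₀, ∀ e, N.IsIncident e (N.leaf x) ↔ e = e₀ := by
  obtain ⟨hsub, ⟨e₀, he₀⟩⟩ := Nat.card_eq_one_iff_unique.1 (N.leaf_in x)
  have hout : IsEmpty {e // N.src e = N.leaf x} :=
    (Finite.card_eq_zero_iff (α := {e // N.src e = N.leaf x})).1 (N.leaf_out x)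
  refine ⟨e₀, fun e => ⟨?_, fun h => .inr (h ▸ he₀)⟩⟩
  rintro (h | h)
  · exact hout.elim ⟨e, h⟩
  · exact congrArg Subtype.val
      (Subsingleton.elim (α := {e // N.tgt e = N.leaf x}) ⟨e, h⟩ ⟨e₀, he₀⟩)

theorem mem_of_conn_leaf {x : X} {e₀ : N.E} (he₀ : ∀ e, N.IsIncident e (N.leaf x) ↔ e = e₀)
    {F : Set N.E} {u : N.V} (h : N.Conn F u (N.leaf x)) (hu : u ≠ N.leaf x) : e₀ ∈ F := by
  obtain ⟨e, he, hinc⟩ := h.exists_mem_isIncident hu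
  exact (he₀ e).1 hinc ▸ he

theorem isBridge_of_isIncident_leaf {x : X} {e : N.E} (he : N.IsIncident e (N.leaf x)) :
    N.IsBridge e := by
  obtain ⟨e₀, he₀⟩ := N.exists_isIncident_leaf_iff x
  obtain rfl := (he₀ e).1 he
  intro h
  rcases he with he | he
  · exact (mem_of_conn_leaf N he₀ (he ▸ h.symm) (he ▸ (N.src_ne_tgt e).symm)).2 rfl
  · exact (mem_of_conn_leaf N he₀ (he ▸ h) (he ▸ N.src_ne_tgt e)).2 rfl

theorem cls_leaf (x : X) : N.cls (N.leaf x) = {N.leaf x} := by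
  obtain ⟨e₀, he₀⟩ := N.exists_isIncident_leaf_iff x
  refine Set.eq_singleton_iff_unique_mem.2 ⟨mem_cls_self _, fun u hu => ?_⟩
  by_contra hne
  exact mem_of_conn_leaf N he₀ hu hne (N.isBridge_of_isIncident_leaf ((he₀ e₀).2 rfl))

theorem exists_ne_mem_nonBridges_isIncident {u w : N.V} (hu : u ∈ N.cls w) (hne : u ≠ w) :
    ∃ g₁ g₂, g₁ ≠ g₂ ∧ g₁ ∈ N.nonBridges ∧ g₂ ∈ N.nonBridges ∧
      N.IsIncident g₁ w ∧ N.IsIncident g₂ w := by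
  obtain ⟨g₁, hg₁, hg₁w⟩ := Conn.exists_mem_isIncident hu hne
  have hc := conn_nonBridges_diff_of_not_isBridge hg₁
  obtain ⟨g₂, ⟨hg₂, hne⟩, hg₂w⟩ : ∃ g₂ ∈ N.nonBridges \ {g₁}, N.IsIncident g₂ w := by
    rcases hg₁w with rfl | rfl
    · exact hc.symm.exists_mem_isIncident (N.src_ne_tgt g₁).symm
    · exact hc.exists_mem_isIncident (N.src_ne_tgt g₁)
  exact ⟨g₁, g₂, Ne.symm hne, hg₁, hg₂, hg₁w, hg₂w⟩

/-- A vertex of a nontrivial blob has two incident edges inside the blob, and degree at most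
three. -/
theorem IsBridge.eq_of_isIncident {u w : N.V} (hu : u ∈ N.cls w) (hne : u ≠ w) {f₁ f₂ : N.E}
    (hf₁ : N.IsBridge f₁) (hf₂ : N.IsBridge f₂) (h₁ : N.IsIncident f₁ w)
    (h₂ : N.IsIncident f₂ w) : f₁ = f₂ := by
  by_contra hf
  obtain ⟨g₁, g₂, hg, hg₁, hg₂, hg₁w, hg₂w⟩ := N.exists_ne_mem_nonBridges_isIncident hu hne
  have hdisj : Disjoint ({f₁, f₂} : Set N.E) {g₁, g₂} := by
    rw [Set.disjoint_left]
    rintro e (rfl | rfl) (rfl | rfl)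
    exacts [hg₁ hf₁, hg₂ hf₁, hg₁ hf₂, hg₂ hf₂]
  have hsub : {f₁, f₂} ∪ {g₁, g₂} ⊆ {e | N.IsIncident e w} := by
    simp only [Set.union_subset_iff, Set.insert_subset_iff, Set.singleton_subset_iff]
    exact ⟨⟨h₁, h₂⟩, hg₁w, hg₂w⟩
  have := (Set.ncard_le_ncard hsub).trans (ncard_setOf_isIncident_le_degree w)
  rw [Set.ncard_union_eq hdisj, Set.ncard_pair hf, Set.ncard_pair hg] at this
  have := N.degree_le_three w
  omega

/-- Otherwise the bridges cutting the taxa of `Q` off `v` would be pairwise distinct and all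
incident to `v`, more than the degree of `v` allows. -/
theorem exists_ne_mem_cls {Q : Set X} (hQ : 4 ≤ Q.ncard) {v : N.V}
    (hv : ∀ f, N.IsBridge f → {x ∈ Q | N.Separates f v (N.leaf x)}.Subsingleton) :
    ∃ u ∈ N.cls v, u ≠ v := by
  by_contra! htriv
  set Q' := {x ∈ Q | N.leaf x ≠ v}
  have hbr : ∀ x ∈ Q', ∃ g, N.IsBridge g ∧ N.IsIncident g v ∧ N.Separates g v (N.leaf x) := by
    rintro x ⟨-, hx⟩
    obtain ⟨g, w, hg, hw, hgw, hsep⟩ :=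
      exists_isBridge_separates_of_notMem_cls N.conn fun h => hx (htriv _ h)
    exact ⟨g, hg, htriv w hw ▸ hgw, hsep⟩
  have : Nonempty N.E := (Nat.card_pos_iff.1 (N.root_out ▸ two_pos)).1.map Subtype.val
  choose! g hg using hbr
  have hinj : Set.InjOn g Q' := fun x hx y hy hxy =>
    hv (g x) (hg x hx).1 ⟨hx.1, (hg x hx).2.2⟩ ⟨hy.1, hxy ▸ (hg y hy).2.2⟩
  have hdeg : Q'.ncard ≤ N.degree v := by
    rw [← hinj.ncard_image]
    exact (Set.ncard_le_ncard (t := {e | N.IsIncident e v})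
      (Set.image_subset_iff.2 fun x hx => (hg x hx).2.1)).trans
      (ncard_setOf_isIncident_le_degree v)
  by_cases hleaf : ∃ x₀, N.leaf x₀ = v
  · obtain ⟨x₀, rfl⟩ := hleaf
    have hQ' : Q ⊆ insert x₀ Q' := fun x hx =>
      (eq_or_ne x x₀).imp id fun h => ⟨hx, fun h' => h (N.leaf_inj h')⟩
    have hfin : Q'.Finite := (Set.finite_of_ncard_ne_zero (by omega)).subset (Set.sep_subset _ _)
    have := (Set.ncard_le_ncard hQ' (hfin.insert x₀)).trans (Set.ncard_insert_le x₀ Q')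
    rw [N.degree_leaf] at hdeg
    omega
  · have hQ' : Q' = Q := Set.sep_eq_self_iff_mem_true.2 fun x _ h => hleaf ⟨x, h⟩
    rw [hQ'] at hdeg
    have := N.degree_le_three v
    omega

/-- Each taxon of `Q` is cut off from `v` by a bridge at some `w` in the blob of `v`; as that
bridge is the only edge at `w` outside the blob, a walk avoiding the blob's edges stays on the
far side of the bridge or at `w`. -/
theorem not_conn_compl_blobOf_edges {Q : Set X} (hQ : 4 ≤ Q.ncard) {v : N.V}
    (hv : ∀ f, N.IsBridge f → {x ∈ Q | N.Separates f v (N.leaf x)}.Subsingleton) :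
    ∀ p ∈ Q, ∀ q ∈ Q, p ≠ q → ¬ N.Conn {e | e ∉ (N.blobOf v).edges} (N.leaf p) (N.leaf q) := by
  obtain ⟨u, hu, huv⟩ := N.exists_ne_mem_cls hQ hv
  have hleaf : ∀ x, N.leaf x ∉ N.cls v := fun x hx => by
    have h := cls_eq_of_mem hx
    rw [cls_leaf] at h
    have hvv := mem_cls_self (G := N.toMDigraph) v
    rw [← h] at hu hvv
    exact huv (hu.trans hvv.symm)
  intro p hp q hq hpq hconn
  obtain ⟨g, w, hg, hw, hgw, hsep⟩ := exists_isBridge_separates_of_notMem_cls N.conn (hleaf p)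
  have huniq : ∀ e, N.IsBridge e → N.IsIncident e w → e = g := by
    obtain ⟨u', hu', hne⟩ : ∃ u' ∈ N.cls w, u' ≠ w := by
      by_cases hwv : w = v
      · exact hwv ▸ ⟨u, hu, huv⟩
      · exact ⟨v, hw.symm, Ne.symm hwv⟩
    exact fun e he hew => IsBridge.eq_of_isIncident N hu' hne he hg hew hgw
  have hw' : ¬ N.Separates g v w := not_separates_of_mem_cls hg hw
  have hinv : ∀ e ∈ {e | e ∉ (N.blobOf v).edges},
      (N.src e = w ∨ N.Separates g v (N.src e)) ↔ (N.tgt e = w ∨ N.Separates g v (N.tgt e)) := by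
    intro e he
    by_cases heg : e = g
    · have hend : ∀ y, N.IsIncident g y → y = w ∨ N.Separates g v y := fun y hy =>
        (eq_or_ne y w).imp id fun hne hvy =>
          hg.separates_of_isIncident hgw hy (Ne.symm hne) ((not_not.1 hw').symm.trans hvy)
      subst heg
      exact iff_of_true (hend _ (.inl rfl)) (hend _ (.inr rfl))
    · have hnw : ∀ y, N.IsIncident e y → y ≠ w := by
        rintro y hy rfl
        by_cases hb : N.IsBridge e
        · exact heg (huniq e hb hy)
        · refine he ⟨hb, ?_⟩
          rcases hy with rfl | rfl
          exacts [⟨hw, (mem_cls_iff_of_mem_nonBridges hb v).1 hw⟩,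
            ⟨(mem_cls_iff_of_mem_nonBridges hb v).2 hw, hw⟩]
      rw [or_iff_right (hnw _ (.inl rfl)), or_iff_right (hnw _ (.inr rfl))]
      exact separates_src_iff_of_ne heg v
  have hsepq := (hconn.restrict_of_invariant (P := fun y => y = w ∨ N.Separates g v y) hinv
    (.inr hsep)).2.resolve_left fun h => hleaf q (h ▸ hw)
  exact hpq (hv g hg ⟨hp, hsep⟩ ⟨hq, hsepq⟩)

theorem edges_eq_empty_of_leaf_mem {B : Subgraph N.toMDigraph}
    (hB : IsBlobIn (top N.toMDigraph) B) {x : X} (hx : N.leaf x ∈ B.verts) : B.edges = ∅ := by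
  refine Set.eq_empty_of_forall_notMem fun e he => ?_
  obtain ⟨-, hs, ht⟩ := (Subgraph.le_blobOf hB.2.1 hB.2.2.1 hx).2 he
  rw [cls_leaf] at hs ht
  exact N.src_ne_tgt e (hs.trans ht.symm)

theorem exists_isBlobIn_not_conn_of_not_cutSep {a b c d : X} (hab : a ≠ b) (hac : a ≠ c)
    (had : a ≠ d) (hbc : b ≠ c) (hbd : b ≠ d) (hcd : c ≠ d)
    (hno : ¬ (CutSep (top N.toMDigraph) N.leaf a b c d ∨ CutSep (top N.toMDigraph) N.leaf a c b d ∨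
      CutSep (top N.toMDigraph) N.leaf a d b c)) :
    ∃ B : Subgraph N.toMDigraph, IsBlobIn (top N.toMDigraph) B ∧
      ∀ p ∈ ({a, b, c, d} : Set X), ∀ q ∈ ({a, b, c, d} : Set X), p ≠ q →
        ¬ N.Conn {e | e ∉ B.edges} (N.leaf p) (N.leaf q) := by
  have hQ : ({a, b, c, d} : Set X).ncard = 4 := by
    rw [Set.ncard_insert_of_notMem (by simp [hab, hac, had]),
      Set.ncard_insert_of_notMem (by simp [hbc, hbd]), Set.ncard_pair hcd]
  have : Nonempty N.V := ⟨N.root⟩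
  obtain ⟨v, hv⟩ := exists_forall_two_mul_ncard_separates_le N.leaf ({a, b, c, d} : Set X) N.conn
    (Set.toFinite _)
  exact ⟨N.blobOf v, blobOf_isBlobIn v, N.not_conn_compl_blobOf_edges hQ.ge fun f hf =>
    subsingleton_setOf_separates_of_not_cutSep N.conn hf v hab hac had hbc hbd hcd
      (hQ ▸ hv f hf) hno⟩

theorem bQuartetIn_of_not_conn {a b c d : X} (hab : a ≠ b)
    (h : ∃ B : Subgraph N.toMDigraph, IsBlobIn (top N.toMDigraph) B ∧
      ∀ p ∈ ({a, b, c, d} : Set X), ∀ q ∈ ({a, b, c, d} : Set X), p ≠ q →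
        ¬ N.Conn {e | e ∉ B.edges} (N.leaf p) (N.leaf q)) :
    BQuartetIn (top N.toMDigraph) N.leaf a b c d := by
  obtain ⟨B, hB, hsep⟩ := h
  refine ⟨B, hB, determinesIn_of_not_conn hB
    (fun x _ hx => hsep a (by simp) b (by simp) hab ?_) hsep⟩
  rw [N.edges_eq_empty_of_leaf_mem hB hx]
  exact (N.conn _ _).mono fun e _ => id

end PhyloNetwork

/-- Let `N⁺` be a rooted binary phylogenetic network on taxon set `X` with
`|X| ≥ 4` and let `Q = {a,b,c,d} ⊆ X` be four distinct taxa.  The following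
are equivalent:
(1) `Q` determines a blob of `N⁺`, i.e. `Q` is a B-quartet;
(2) there is a single blob of `N⁺` such that deletion of all edges of that
    blob leaves the elements of `Q` in four distinct connected components;
(3) the unresolved quartet on `Q` is displayed on the reduced unrooted tree of
    blobs `T_rd(N⁻)`, i.e. no edge of `T_rd(N⁻)` — equivalently no cut edge of
    the network — separates exactly two elements of `Q` from the other two. -/
theorem stmt_12 {X : Type} (N : PhyloNetwork X) (a b c d : X)
    (hpair : List.Pairwise (· ≠ ·) [a, b, c, d]) :
    (BQuartetIn (top N.toMDigraph) N.leaf a b c d ↔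
      (∃ B : Subgraph N.toMDigraph, IsBlobIn (top N.toMDigraph) B ∧
        ∀ p ∈ ({a, b, c, d} : Set X), ∀ q ∈ ({a, b, c, d} : Set X), p ≠ q →
          ¬ N.toMDigraph.Conn {e | e ∉ B.edges} (N.leaf p) (N.leaf q))) ∧
    (BQuartetIn (top N.toMDigraph) N.leaf a b c d ↔
      ¬ (CutSep (top N.toMDigraph) N.leaf a b c d ∨
         CutSep (top N.toMDigraph) N.leaf a c b d ∨
         CutSep (top N.toMDigraph) N.leaf a d b c)) := by
  obtain ⟨⟨hab, hac, had⟩, ⟨hbc, hbd⟩, hcd⟩ :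
      (a ≠ b ∧ a ≠ c ∧ a ≠ d) ∧ (b ≠ c ∧ b ≠ d) ∧ c ≠ d := by
    simpa using hpair
  have hsep := N.exists_isBlobIn_not_conn_of_not_cutSep hab hac had hbc hbd hcd
  exact ⟨⟨fun h => hsep (h.not_cutSep hab hac had hbc hbd hcd), N.bQuartetIn_of_not_conn hab⟩,
    ⟨fun h => h.not_cutSep hab hac had hbc hbd hcd,
      fun h => N.bQuartetIn_of_not_conn hab (hsep h)⟩⟩
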